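/- Fix real constants m₀ > 0, ω > 0, ħ > 0, a > -1 and set λ₀ = √(m₀ω/ħ). Define for x ≠ 0: (X̃f)(x) = √m₀·λ₀^a·|x|^a·x·f(x), (P̃f)(x) = -iħ·(λ₀^a√m₀)⁻¹·(|x|^{-a}·f'(x) - (a/2)·|x|^{-a-2}·x·f(x)), and the ladder operators (ã^±f)(x) = (1/√2)·(√(ω/ħ)·(X̃f)(x) ∓ (i/√(ħω))·(P̃f)(x)). Then for every f : ℝ → ℂ that is twice differentiable on ℝ \ {0} and every x ≠ 0: ã⁻(ã⁺f)(x) - ã⁺(ã⁻f)(x) = (1+a)·f(x). -/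

import Mathlib

/-!
Write `ã^± = α X̃ ∓ β P̃` with `α = √(ω/2ħ)` and `β = i/√(2ħω)`. Since `X̃` and `P̃` act linearly
on functions differentiable at `x`, the commutator `[ã⁻, ã⁺]` collapses to
`-2αβ [X̃, P̃] = -(i/ħ) [X̃, P̃]`. By the product rule only the derivative of the coefficient
`√m₀ λ₀^a |x|^a x` of `X̃` survives in `[X̃, P̃]`, and since `(|x|^a x)' = (1 + a)|x|^a` this gives
`[X̃, P̃] = iħ(1 + a)`.
-/


/-- The deformed position operator `(X̃f)(x) = √m₀·λ₀^a·|x|^a·x·f(x)`. -/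
noncomputable def Xop (m₀ lam a : ℝ) (f : ℝ → ℂ) (x : ℝ) : ℂ :=
  ((Real.sqrt m₀ * lam ^ a * |x| ^ a * x : ℝ) : ℂ) * f x

/-- The deformed momentum operator
`(P̃f)(x) = -ihbar·(λ₀^a√m₀)⁻¹·(|x|^(-a)·f'(x) - (a/2)·|x|^(-a-2)·x·f(x))`. -/
noncomputable def Pop (hbar m₀ lam a : ℝ) (f : ℝ → ℂ) (x : ℝ) : ℂ :=
  (-Complex.I) * (hbar : ℂ) * (((lam ^ a * Real.sqrt m₀ : ℝ) : ℂ))⁻¹ *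
    (((|x| ^ (-a) : ℝ) : ℂ) * deriv f x
      - ((a / 2 : ℝ) : ℂ) * ((|x| ^ (-a - 2) : ℝ) : ℂ) * (x : ℂ) * f x)


/-- The creation operator `(ã⁺f)(x) = (1/√2)·(√(ω/ħ)·(X̃f)(x) - (i/√(ħω))·(P̃f)(x))`. -/
noncomputable def aPlus (hbar m₀ ω lam a : ℝ) (f : ℝ → ℂ) (x : ℝ) : ℂ :=
  ((1 / Real.sqrt 2 : ℝ) : ℂ) *
    (((Real.sqrt (ω / hbar) : ℝ) : ℂ) * Xop m₀ lam a f x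
      - Complex.I / ((Real.sqrt (hbar * ω) : ℝ) : ℂ) * Pop hbar m₀ lam a f x)

/-- The annihilation operator `(ã⁻f)(x) = (1/√2)·(√(ω/ħ)·(X̃f)(x) + (i/√(ħω))·(P̃f)(x))`. -/
noncomputable def aMinus (hbar m₀ ω lam a : ℝ) (f : ℝ → ℂ) (x : ℝ) : ℂ :=
  ((1 / Real.sqrt 2 : ℝ) : ℂ) *
    (((Real.sqrt (ω / hbar) : ℝ) : ℂ) * Xop m₀ lam a f x
      + Complex.I / ((Real.sqrt (hbar * ω) : ℝ) : ℂ) * Pop hbar m₀ lam a f x)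

open Complex

theorem hasDerivAt_abs_rpow_of_ne_zero (p : ℝ) {x : ℝ} (hx : x ≠ 0) :
    HasDerivAt (fun y : ℝ => |y| ^ p) (p * |x| ^ p / x) x := by
  have hpow : HasDerivAt (fun t : ℝ => t ^ p) (p * |x| ^ (p - 1)) |x| :=
    Real.hasDerivAt_rpow_const (Or.inl (abs_ne_zero.mpr hx))
  have hsub : |x| ^ (p - 1) = |x| ^ p / |x| := Real.rpow_sub_one (abs_ne_zero.mpr hx) p
  rcases hx.lt_or_gt with h | h
  · refine (hpow.comp x (hasDerivAt_abs_neg h)).congr_deriv ?_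
    rw [hsub, abs_of_neg h]
    field_simp
  · refine (hpow.comp x (hasDerivAt_abs_pos h)).congr_deriv ?_
    rw [hsub, abs_of_pos h]
    ring

theorem hasDerivAt_abs_rpow_mul_self (p : ℝ) {x : ℝ} (hx : x ≠ 0) :
    HasDerivAt (fun y : ℝ => |y| ^ p * y) ((p + 1) * |x| ^ p) x := by
  refine ((hasDerivAt_abs_rpow_of_ne_zero p hx).mul (hasDerivAt_id' x)).congr_deriv ?_
  field_simp

noncomputable def ladderX (hbar ω : ℝ) : ℂ :=
  ((1 / Real.sqrt 2 : ℝ) : ℂ) * ((Real.sqrt (ω / hbar) : ℝ) : ℂ)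

noncomputable def ladderP (hbar ω : ℝ) : ℂ :=
  ((1 / Real.sqrt 2 : ℝ) : ℂ) * (I / ((Real.sqrt (hbar * ω) : ℝ) : ℂ))

theorem ladderX_mul_ladderP {hbar ω : ℝ} (hω : 0 < ω) (hhb : 0 < hbar) :
    ladderX hbar ω * ladderP hbar ω = I / (2 * hbar) := by
  have hsqrt : Real.sqrt (hbar * ω) = Real.sqrt (ω / hbar) * hbar := by
    rw [show hbar * ω = ω / hbar * hbar ^ 2 by field_simp,
      Real.sqrt_mul (div_nonneg hω.le hhb.le), Real.sqrt_sq hhb.le]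
  have h2 : ((Real.sqrt 2 : ℝ) : ℂ) ^ 2 = 2 := by
    exact_mod_cast Real.sq_sqrt zero_le_two
  have hpos : ((Real.sqrt (ω / hbar) : ℝ) : ℂ) ≠ 0 :=
    ofReal_ne_zero.mpr (Real.sqrt_pos.mpr (div_pos hω hhb)).ne'
  have hb : (hbar : ℂ) ≠ 0 := ofReal_ne_zero.mpr hhb.ne'
  simp only [ladderX, ladderP, hsqrt]
  push_cast
  field_simp
  linear_combination -h2

section Operators

variable {hbar m₀ ω lam a : ℝ} {f g h : ℝ → ℂ} {x : ℝ}

theorem Xop_linear_comb (α β : ℂ) :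
    Xop m₀ lam a (fun y => α * g y + β * h y) x
      = α * Xop m₀ lam a g x + β * Xop m₀ lam a h x := by
  simp only [Xop]
  ring

theorem Pop_linear_comb (hg : DifferentiableAt ℝ g x) (hh : DifferentiableAt ℝ h x) (α β : ℂ) :
    Pop hbar m₀ lam a (fun y => α * g y + β * h y) x
      = α * Pop hbar m₀ lam a g x + β * Pop hbar m₀ lam a h x := by
  simp only [Pop]
  rw [deriv_fun_add (hg.const_mul α) (hh.const_mul β), deriv_const_mul_field, deriv_const_mul_field]
  ring

theorem hasDerivAt_Xop (hf : DifferentiableAt ℝ f x) (hx : x ≠ 0) :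
    HasDerivAt (Xop m₀ lam a f)
      (((Real.sqrt m₀ * lam ^ a * ((a + 1) * |x| ^ a) : ℝ) : ℂ) * f x
        + ((Real.sqrt m₀ * lam ^ a * |x| ^ a * x : ℝ) : ℂ) * deriv f x) x := by
  have hu := (((hasDerivAt_abs_rpow_mul_self a hx).const_mul (Real.sqrt m₀ * lam ^ a)).ofReal_comp)
  have hX : Xop m₀ lam a f = fun y => ((Real.sqrt m₀ * lam ^ a * (|y| ^ a * y) : ℝ) : ℂ) * f y := by
    funext y
    simp only [Xop, mul_assoc]
  rw [hX]
  exact (hu.mul hf.hasDerivAt).congr_deriv (by push_cast; ring)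

theorem differentiableAt_Pop (hf : DifferentiableAt ℝ f x) (hf' : DifferentiableAt ℝ (deriv f) x)
    (hx : x ≠ 0) : DifferentiableAt ℝ (Pop hbar m₀ lam a f) x := by
  have hv := (hasDerivAt_abs_rpow_of_ne_zero (-a) hx).ofReal_comp.differentiableAt
  have hw := (hasDerivAt_abs_rpow_of_ne_zero (-a - 2) hx).ofReal_comp.differentiableAt
  unfold Pop
  fun_prop

theorem Xop_Pop_sub_Pop_Xop (hc : lam ^ a * Real.sqrt m₀ ≠ 0) (hf : DifferentiableAt ℝ f x)
    (hx : x ≠ 0) :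
    Xop m₀ lam a (Pop hbar m₀ lam a f) x - Pop hbar m₀ lam a (Xop m₀ lam a f) x
      = I * hbar * ((1 + a : ℝ) : ℂ) * f x := by
  have hv : ((|x| ^ (-a) * |x| ^ a : ℝ) : ℂ) = 1 := by
    rw [Real.rpow_neg (abs_nonneg x), inv_mul_cancel₀ (Real.rpow_pos_of_pos (abs_pos.mpr hx) a).ne',
      ofReal_one]
  obtain ⟨hl, hm⟩ := mul_ne_zero_iff.mp hc
  have hlC : ((lam ^ a : ℝ) : ℂ) ≠ 0 := ofReal_ne_zero.mpr hl
  have hmC : ((Real.sqrt m₀ : ℝ) : ℂ) ≠ 0 := ofReal_ne_zero.mpr hm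
  simp only [Pop, (hasDerivAt_Xop hf hx).deriv, Xop]
  push_cast at hv ⊢
  field_simp
  linear_combination (2 * hbar * (1 + a) * f x) * hv

theorem aPlus_eq :
    aPlus hbar m₀ ω lam a f
      = fun y => ladderX hbar ω * Xop m₀ lam a f y + -ladderP hbar ω * Pop hbar m₀ lam a f y := by
  funext y
  simp only [aPlus, ladderX, ladderP]
  ring

theorem aMinus_eq :
    aMinus hbar m₀ ω lam a f
      = fun y => ladderX hbar ω * Xop m₀ lam a f y + ladderP hbar ω * Pop hbar m₀ lam a f y := by
  funext y
  simp only [aMinus, ladderX, ladderP]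
  ring

end Operators

theorem stmt2_general (m₀ ω hbar a : ℝ) (hm₀ : 0 < m₀) (hω : 0 < ω) (hhb : 0 < hbar)
    (lam : ℝ) (hlam : lam = Real.sqrt (m₀ * ω / hbar))
    (f : ℝ → ℂ)
    (hf : ∀ y : ℝ, y ≠ 0 → DifferentiableAt ℝ f y)
    (hf' : ∀ y : ℝ, y ≠ 0 → DifferentiableAt ℝ (deriv f) y)
    (x : ℝ) (hx : x ≠ 0) :
    aMinus hbar m₀ ω lam a (aPlus hbar m₀ ω lam a f) x
      - aPlus hbar m₀ ω lam a (aMinus hbar m₀ ω lam a f) x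
      = ((1 + a : ℝ) : ℂ) * f x := by
  have hc : lam ^ a * Real.sqrt m₀ ≠ 0 := by
    have hlam_pos : 0 < lam := hlam ▸ Real.sqrt_pos.mpr (by positivity)
    exact mul_ne_zero (Real.rpow_pos_of_pos hlam_pos a).ne' (Real.sqrt_pos.mpr hm₀).ne'
  have hX : DifferentiableAt ℝ (Xop m₀ lam a f) x := (hasDerivAt_Xop (hf x hx) hx).differentiableAt
  have hP : DifferentiableAt ℝ (Pop hbar m₀ lam a f) x :=
    differentiableAt_Pop (hf x hx) (hf' x hx) hx
  have hcomm := Xop_Pop_sub_Pop_Xop (hbar := hbar) hc (hf x hx) hx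
  have hcoeff : 2 * ladderX hbar ω * ladderP hbar ω * (I * hbar) = -1 := by
    have hb : (hbar : ℂ) ≠ 0 := ofReal_ne_zero.mpr hhb.ne'
    rw [mul_assoc 2, ladderX_mul_ladderP hω hhb]
    field_simp
    rw [I_sq]
  simp only [aMinus_eq, aPlus_eq, Xop_linear_comb, Pop_linear_comb hX hP]
  linear_combination (-2 * ladderX hbar ω * ladderP hbar ω) * hcomm - ((1 + a : ℝ) * f x) * hcoeff

/-- the commutator `[ã⁻, ã⁺] = 1 + a` for every `f` twice differentiable on
`ℝ \ {0}` and every `x ≠ 0`. -/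
theorem stmt2 (m₀ ω hbar a : ℝ) (hm₀ : 0 < m₀) (hω : 0 < ω) (hhb : 0 < hbar) (ha : -1 < a)
    (lam : ℝ) (hlam : lam = Real.sqrt (m₀ * ω / hbar))
    (f : ℝ → ℂ)
    (hf : ∀ y : ℝ, y ≠ 0 → DifferentiableAt ℝ f y)
    (hf' : ∀ y : ℝ, y ≠ 0 → DifferentiableAt ℝ (deriv f) y)
    (x : ℝ) (hx : x ≠ 0) :
    aMinus hbar m₀ ω lam a (aPlus hbar m₀ ω lam a f) x
      - aPlus hbar m₀ ω lam a (aMinus hbar m₀ ω lam a f) x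
      = ((1 + a : ℝ) : ℂ) * f x :=
  stmt2_general m₀ ω hbar a hm₀ hω hhb lam hlam f hf hf' x hx
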